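/- arXiv:1004.5472 — 4 statements merged into one kernel-verified Lean document; each statement's English description precedes it below -/
import Mathlib

section
/- Let R = k[x_1,...,x_m] with the standard Z^m-multigrading and let L be a Noetherian multigraded R-module. For every i ≥ 1 and every α ∈ Z^m, if the multigraded Betti number β_{i,α}(L) is nonzero then α belongs to the LCM-lattice Λ(L). -/
/-!
STATEMENT 2: Let `R = k[x_1,...,x_m]` with the standard `ℤ^m`-multigrading and `L` a
Noetherian multigraded `R`-module, with minimal multigraded free resolution `F` (whose
first homological degree has basis `S = F.B 1`, the basis of the minimal presentation
`Φ : E → G`).  For every `i ≥ 1` and every `α ∈ ℤ^m`, if `β_{i,α}(L) ≠ 0` then `α`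
belongs to the LCM-lattice `Λ(L)`, i.e. `α` is the join (componentwise maximum) of the
multidegrees of a (nonempty) subset of `S`.
-/

open MvPolynomial

open MvPolynomial

/-- A minimal multigraded free resolution of a module `L` over the polynomial ring
`R = k[x_1, ..., x_m]` with its standard `ℤ^m`-multigrading.  `B i` is the (finite) set of
multihomogeneous basis elements of the `i`-th free module, of multidegrees `deg i`; the
differentials and the augmentation `F_0 → L` form an exact sequence, each entry of each
differential is multihomogeneous of the appropriate degree (an entry is a scalar multiple
of the monomial whose exponent is the difference of the degrees of the corresponding basis
elements, and vanishes if that difference is not componentwise nonnegative) and lies in the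
irrelevant maximal ideal (its constant coefficient vanishes, i.e. minimality). -/
structure MinimalMultigradedFreeResolution (k : Type) [Field k] (m : ℕ)
    (L : Type) [AddCommGroup L] [Module (MvPolynomial (Fin m) k) L] where
  B : ℕ → Type
  finiteB : ∀ i, Finite (B i)
  deg : (i : ℕ) → B i → (Fin m → ℤ)
  d : (i : ℕ) → (B (i + 1) →₀ MvPolynomial (Fin m) k) →ₗ[MvPolynomial (Fin m) k]
      (B i →₀ MvPolynomial (Fin m) k)
  aug : (B 0 →₀ MvPolynomial (Fin m) k) →ₗ[MvPolynomial (Fin m) k] L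
  aug_surjective : Function.Surjective aug
  exact_at_zero : LinearMap.ker aug = LinearMap.range (d 0)
  exact_at_succ : ∀ i, LinearMap.ker (d i) = LinearMap.range (d (i + 1))
  minimal : ∀ (i : ℕ) (b : B (i + 1)) (b' : B i),
      MvPolynomial.coeff 0 (d i (Finsupp.single b 1) b') = 0
  homogeneous : ∀ (i : ℕ) (b : B (i + 1)) (b' : B i), ∃ c : k,
      d i (Finsupp.single b 1) b' =
        c • MvPolynomial.monomial
          (Finsupp.equivFunOnFinite.symm fun j => (deg (i + 1) b j - deg i b' j).toNat) 1 ∧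
      (¬ deg i b' ≤ deg (i + 1) b → c = 0)

/-- The multigraded Betti number `β_{i,α}(L)`: the number of basis elements of
multidegree `α` in homological degree `i` of a minimal multigraded free resolution. -/
noncomputable def MinimalMultigradedFreeResolution.betti {k : Type} [Field k] {m : ℕ}
    {L : Type} [AddCommGroup L] [Module (MvPolynomial (Fin m) k) L]
    (F : MinimalMultigradedFreeResolution k m L) (i : ℕ) (α : Fin m → ℤ) : ℕ :=
  Nat.card {b : F.B i // F.deg i b = α}

/-! Let `b` be a basis element of `F_{n+2}` with `d(e_b) = v`. By homogeneity every `b'` in the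
support of `v` has `deg b' ≤ deg b`. If the join of these degrees were strictly below `deg b` in
some coordinate `j`, then `X_j` would divide every entry of `v`, say `v = X_j • w`; since `X_j` is
a nonzerodivisor, `w` is a cycle, hence `w = d(y)`, and then `e_b - X_j • y` is a cycle whose
`b`-entry has constant coefficient `1`, contradicting minimality. So `deg b` is the join of
degrees from `F_{n+1}`, and by induction a join of degrees from `F_1`. -/

theorem Finsupp.exists_eq_smul_of_forall_dvd {ι R : Type*} [Finite ι] [CommSemiring R]
    (r : R) (v : ι →₀ R) (h : ∀ i, r ∣ v i) : ∃ w : ι →₀ R, v = r • w := by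
  choose f hf using h
  exact ⟨Finsupp.equivFunOnFinite.symm f, Finsupp.ext fun i => by simp [hf i]⟩

namespace MinimalMultigradedFreeResolution

variable {k : Type} [Field k] {m : ℕ} {L : Type} [AddCommGroup L]
  [Module (MvPolynomial (Fin m) k) L] (F : MinimalMultigradedFreeResolution k m L)

/-- The LCM-lattice `Λ(L)`, with `S = F.B 1`. -/
def lcmLattice : Set (Fin m → ℤ) :=
  {γ | ∃ A : Finset (F.B 1), A.Nonempty ∧
    A.sup (fun a => (↑(F.deg 1 a) : WithBot (Fin m → ℤ))) = ↑γ}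

theorem supClosed_lcmLattice : SupClosed F.lcmLattice := by
  classical
  rintro x ⟨A₁, hA₁, hx⟩ y ⟨A₂, hA₂, hy⟩
  exact ⟨A₁ ∪ A₂, hA₁.mono Finset.subset_union_left,
    by rw [Finset.sup_union, hx, hy, WithBot.coe_sup]⟩

theorem deg_one_mem_lcmLattice (b : F.B 1) : F.deg 1 b ∈ F.lcmLattice :=
  ⟨{b}, Finset.singleton_nonempty b, Finset.sup_singleton⟩

theorem d_d (i : ℕ) (x : F.B (i + 2) →₀ MvPolynomial (Fin m) k) :
    F.d i (F.d (i + 1) x) = 0 := by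
  rw [← LinearMap.mem_ker, F.exact_at_succ]
  exact LinearMap.mem_range_self _ x

theorem constantCoeff_d_apply (i : ℕ) (x : F.B (i + 1) →₀ MvPolynomial (Fin m) k)
    (b' : F.B i) : constantCoeff (F.d i x b') = 0 := by
  induction x using Finsupp.induction_linear with
  | zero => simp
  | add x y hx hy => rw [map_add, Finsupp.add_apply, map_add, hx, hy, add_zero]
  | single b p =>
    rw [← mul_one p, ← Finsupp.smul_single', map_smul, Finsupp.smul_apply, smul_eq_mul,
      map_mul, constantCoeff_eq, F.minimal, mul_zero]

theorem d_ne_zero_of_constantCoeff_ne_zero (i : ℕ)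
    (x : F.B (i + 2) →₀ MvPolynomial (Fin m) k) (b : F.B (i + 2))
    (hx : constantCoeff (x b) ≠ 0) : F.d (i + 1) x ≠ 0 := by
  intro h
  obtain ⟨z, rfl⟩ : x ∈ LinearMap.range (F.d (i + 2)) := by
    rw [← F.exact_at_succ, LinearMap.mem_ker, h]
  exact hx (F.constantCoeff_d_apply _ z b)

theorem d_single_apply_eq_zero_of_not_le (i : ℕ) (b : F.B (i + 1)) (b' : F.B i)
    (h : ¬ F.deg i b' ≤ F.deg (i + 1) b) : F.d i (Finsupp.single b 1) b' = 0 := by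
  obtain ⟨c, hc, hc0⟩ := F.homogeneous i b b'
  rw [hc, hc0 h, zero_smul]

theorem deg_le_of_mem_support (i : ℕ) (b : F.B (i + 1)) {b' : F.B i}
    (hb' : b' ∈ (F.d i (Finsupp.single b 1)).support) : F.deg i b' ≤ F.deg (i + 1) b := by
  by_contra h
  exact Finsupp.mem_support_iff.mp hb' (F.d_single_apply_eq_zero_of_not_le i b b' h)

theorem X_dvd_d_single_apply (i : ℕ) (b : F.B (i + 1)) (b' : F.B i) {j : Fin m}
    (hj : F.deg i b' j < F.deg (i + 1) b j) : X j ∣ F.d i (Finsupp.single b 1) b' := by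
  obtain ⟨c, hc, -⟩ := F.homogeneous i b b'
  rw [hc, smul_monomial, smul_eq_mul, mul_one, X_dvd_monomial]
  right
  simp only [Finsupp.equivFunOnFinite_symm_apply_apply]
  omega

theorem d_single_ne_smul (i : ℕ) (b : F.B (i + 2)) {r : MvPolynomial (Fin m) k} (hr : r ≠ 0)
    (hr0 : constantCoeff r = 0) (w : F.B (i + 1) →₀ MvPolynomial (Fin m) k) :
    F.d (i + 1) (Finsupp.single b 1) ≠ r • w := by
  intro hv
  have hdw : F.d i w = 0 := by
    have h := F.d_d i (Finsupp.single b 1)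
    rwa [hv, map_smul, smul_eq_zero, or_iff_right hr] at h
  obtain ⟨y, rfl⟩ : w ∈ LinearMap.range (F.d (i + 1)) := by
    rwa [← F.exact_at_succ, LinearMap.mem_ker]
  refine F.d_ne_zero_of_constantCoeff_ne_zero i (Finsupp.single b 1 - r • y) b ?_ ?_
  · simp [hr0]
  · rw [map_sub, map_smul, hv, sub_self]

theorem d_single_ne_zero (i : ℕ) (b : F.B (i + 2)) : F.d (i + 1) (Finsupp.single b 1) ≠ 0 :=
  F.d_ne_zero_of_constantCoeff_ne_zero i _ b (by simp)

theorem sup'_deg_support_d_single (i : ℕ) (b : F.B (i + 2))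
    (h : (F.d (i + 1) (Finsupp.single b 1)).support.Nonempty) :
    (F.d (i + 1) (Finsupp.single b 1)).support.sup' h (F.deg (i + 1)) = F.deg (i + 2) b := by
  have := F.finiteB (i + 1)
  refine le_antisymm (Finset.sup'_le _ _ fun b' => F.deg_le_of_mem_support (i + 1) b) ?_
  by_contra hlt
  obtain ⟨j, hj⟩ : ∃ j, (F.d (i + 1) (Finsupp.single b 1)).support.sup' h (F.deg (i + 1)) j <
      F.deg (i + 2) b j := by
    simpa only [Pi.le_def, not_forall, not_le] using hlt
  have hdvd : ∀ b', X j ∣ F.d (i + 1) (Finsupp.single b 1) b' := by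
    intro b'
    by_cases hb' : b' ∈ (F.d (i + 1) (Finsupp.single b 1)).support
    · exact F.X_dvd_d_single_apply (i + 1) b b' <|
        lt_of_le_of_lt (Finset.le_sup' (F.deg (i + 1)) hb' j) hj
    · rw [Finsupp.notMem_support_iff.mp hb']
      exact dvd_zero _
  obtain ⟨w, hw⟩ := Finsupp.exists_eq_smul_of_forall_dvd _ _ hdvd
  exact F.d_single_ne_smul i b (X_ne_zero j) (constantCoeff_X _ j) w hw

theorem deg_mem_lcmLattice : ∀ (i : ℕ) (b : F.B (i + 1)), F.deg (i + 1) b ∈ F.lcmLattice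
  | 0, b => F.deg_one_mem_lcmLattice b
  | i + 1, b => by
    have h := Finsupp.support_nonempty_iff.mpr (F.d_single_ne_zero i b)
    rw [← F.sup'_deg_support_d_single i b h]
    exact F.supClosed_lcmLattice.finsetSup'_mem h fun b' _ => deg_mem_lcmLattice i b'

end MinimalMultigradedFreeResolution

theorem betti_nonzero_implies_mem_LCM_lattice
    {k : Type} [Field k] {m : ℕ} {L : Type} [AddCommGroup L]
    [Module (MvPolynomial (Fin m) k) L]
    (F : MinimalMultigradedFreeResolution k m L) :
    ∀ i : ℕ, 1 ≤ i → ∀ α : Fin m → ℤ, F.betti i α ≠ 0 →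
      ∃ A : Finset (F.B 1), A.Nonempty ∧
        A.sup (fun a => (↑(F.deg 1 a) : WithBot (Fin m → ℤ))) =
          (↑α : WithBot (Fin m → ℤ)) := by
  intro i hi α hβ
  obtain ⟨⟨b, rfl⟩⟩ := (Nat.card_ne_zero.mp hβ).1
  obtain ⟨n, rfl⟩ := Nat.exists_eq_add_of_le' hi
  exact F.deg_mem_lcmLattice n b
end

section
/- Let J be a monomial ideal in R = k[x_1,...,x_m] that is generic in the sense of Bayer–Peeva–Sturmfels, i.e., no variable x_i appears with the same nonzero exponent in two distinct minimal monomial generators of J. Then R/J is of generic type: for every α in the LCM-lattice of J, the set of subsets of minimal generators whose lcm has exponent vector α is a closed interval in the boolean poset of subsets of the generating set. -/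
/-!
STATEMENT 4: If `J` is a monomial ideal with minimal monomial generators `g 0, ..., g (n-1)`
(identified with their exponent vectors in `ℕ^m`, so minimality says no generator divides
another) which is generic in the sense of Bayer–Peeva–Sturmfels (no variable appears with the
same nonzero exponent in two distinct minimal generators), then `R/J` is of generic type:
for every `α` in the LCM-lattice (the image of `A ↦ A.sup g`, the exponent vector of
`lcm(A)`), the fiber `{A | deg A = α}` is a closed interval in the boolean poset of subsets
of the generating set.
-/
theorem generic_type_of_BPS_generic {m n : ℕ} (g : Fin n → (Fin m → ℕ))
    (hmin : ∀ s t : Fin n, s ≠ t → ¬ g s ≤ g t)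
    (hBPS : ∀ (i : Fin m) (s t : Fin n), g s ≠ g t → g s i ≠ 0 → g s i ≠ g t i) :
    ∀ α ∈ Set.range (fun A : Finset (Fin n) => A.sup g),
      ∃ lo hi : Finset (Fin n),
        {A : Finset (Fin n) | A.sup g = α} = Set.Icc lo hi := by
  classical
  rintro α ⟨B, hB⟩
  simp only at hB
  set hi : Finset (Fin n) := Finset.univ.filter (fun s => g s ≤ α) with hhi
  set lo : Finset (Fin n) := hi.filter (fun s => ∃ i, α i ≠ 0 ∧ g s i = α i) with hlo
  have hmemhi : ∀ s, s ∈ hi ↔ g s ≤ α := by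
    intro s; simp [hhi]
  have hBhi : B ⊆ hi := fun t ht => (hmemhi t).2 (hB ▸ Finset.le_sup ht)
  have hhisup : hi.sup g = α :=
    le_antisymm (Finset.sup_le fun s hs => (hmemhi s).1 hs)
      (hB ▸ Finset.sup_mono hBhi)
  -- attainment
  have hatt : ∀ (A : Finset (Fin n)) (i : Fin m), A.sup g = α → α i ≠ 0 →
      ∃ s ∈ A, g s i = α i := by
    intro A i hA hi0
    have hsup : A.sup (fun t => g t i) = α i := by
      rw [← hA, ← Finset.sup_apply]
    have hne : A.Nonempty := by
      rcases A.eq_empty_or_nonempty with h | h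
      · exfalso; apply hi0; rw [← hsup, h, Finset.sup_empty]; rfl
      · exact h
    obtain ⟨s, hs, hs2⟩ := Finset.exists_mem_eq_sup A hne (fun t => g t i)
    exact ⟨s, hs, by rw [← hs2, hsup]⟩
  -- uniqueness of attainer
  have huniq : ∀ s t : Fin n, ∀ i : Fin m, α i ≠ 0 → g s i = α i → g t i = α i →
      s = t := by
    intro s t i hi0 hs ht
    by_contra hne
    have hgne : g s ≠ g t := fun h => hmin s t hne (le_of_eq h)
    exact hBPS i s t hgne (hs ▸ hi0) (hs.trans ht.symm)
  refine ⟨lo, hi, ?_⟩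
  ext A
  simp only [Set.mem_setOf_eq, Set.mem_Icc]
  constructor
  · intro hA
    refine ⟨?_, fun s hs => (hmemhi s).2 (hA ▸ Finset.le_sup hs)⟩
    intro s hs
    rw [hlo, Finset.mem_filter] at hs
    obtain ⟨_, i, hi0, hsi⟩ := hs
    obtain ⟨t, ht, hti⟩ := hatt A i hA hi0
    exact (huniq s t i hi0 hsi hti) ▸ ht
  · rintro ⟨hloA, hAhi⟩
    refine le_antisymm (Finset.sup_le fun s hs => (hmemhi s).1 (hAhi hs)) ?_
    intro i
    by_cases hi0 : α i = 0
    · simp [hi0]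
    · obtain ⟨s, hs, hsi⟩ := hatt hi i hhisup hi0
      have hslo : s ∈ lo := by
        rw [hlo, Finset.mem_filter]; exact ⟨hs, i, hi0, hsi⟩
      calc α i = g s i := hsi.symm
        _ ≤ (A.sup g) i := (Finset.le_sup (f := g) (hloA hslo)) i
end

section
/- Let k be a field, S a finite set, W a k-vector space, φ: k^S → W a linear map, V_A = span_k{φ(e_a) : a ∈ A}, and X ⊆ S. Let π: W → W/V_X be the canonical projection. Then the matroid on S \ X represented by the linear map k^{S\X} → W/V_X sending e_a to π(φ(e_a)) equals the contraction M(φ)/X of the matroid M(φ) by X (with ground set restricted to S \ X). -/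
/-!
Contracting by `X` amounts to contracting by any maximal independent subset `B ⊆ X`, and such a
`B` spans `V_X`. Hence `I ∪ B` is independent iff `I` is independent and its span meets `V_X`
trivially, which is exactly independence of the images of `I` in `W ⧸ V_X`.
-/

open Submodule

theorem linearIndepOn_mkQ_comp_iff {ι R M : Type*} [Ring R] [AddCommGroup M] [Module R M]
    (p : Submodule R M) (v : ι → M) (s : Set ι) :
    LinearIndepOn R (p.mkQ ∘ v) s ↔ LinearIndepOn R v s ∧ Disjoint (span R (v '' s)) p := by
  rw [Set.image_eq_range]
  refine ⟨fun h => ⟨h.of_comp p.mkQ, ?_⟩, fun ⟨h, hp⟩ => h.map (by rwa [ker_mkQ])⟩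
  simpa only [ker_mkQ] using range_ker_disjoint (f := p.mkQ) h

section MaximalIndependent

variable {ι K M : Type*} [DivisionRing K] [AddCommGroup M] [Module K M] (f : ι → M)

theorem Finset.exists_linearIndepOn_image_subset_span (X : Finset ι) :
    ∃ B ⊆ X, LinearIndepOn K f ↑B ∧ f '' ↑X ⊆ span K (f '' ↑B) := by
  obtain ⟨b, hbX, -, hXb, hb⟩ :=
    exists_linearIndepOn_extension (linearIndepOn_empty K f) (Set.empty_subset (X : Set ι))
  obtain ⟨B, rfl⟩ := (X.finite_toSet.subset hbX).exists_finset_coe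
  exact ⟨B, Finset.coe_subset.1 hbX, hb, hXb⟩

theorem Finset.linearIndepOn_maximal_iff_image_subset_span [DecidableEq ι] {B X : Finset ι}
    (hBX : B ⊆ X) (hB : LinearIndepOn K f ↑B) :
    (∀ B' : Finset ι, B ⊆ B' → B' ⊆ X → LinearIndepOn K f ↑B' → B' = B) ↔
      f '' ↑X ⊆ span K (f '' ↑B) := by
  constructor
  · rintro hmax - ⟨x, hx, rfl⟩
    refine hB.mem_span_iff.2 fun hxB => ?_
    rw [← Finset.coe_insert] at hxB
    rw [← hmax _ (Finset.subset_insert x B) (Finset.insert_subset hx hBX) hxB]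
    exact Finset.mem_insert_self x B
  · intro hXB B' hBB' hB'X hB'
    refine Finset.Subset.antisymm (fun x hx => ?_) hBB'
    have hxB : f x ∈ span K (f '' ↑B) := hXB ⟨x, hB'X hx, rfl⟩
    refine hB.mem_span_iff.1 hxB (hB'.mono ?_)
    rw [← Finset.coe_insert, Finset.coe_subset]
    exact Finset.insert_subset hx hBB'

end MaximalIndependent

theorem linearIndepOn_union_iff_of_image_subset_span {ι K M : Type*} [DivisionRing K]
    [AddCommGroup M] [Module K M] {f : ι → M} {I B X : Set ι} (hIX : Disjoint I X)
    (hBX : B ⊆ X) (hB : LinearIndepOn K f B) (hXB : f '' X ⊆ span K (f '' B)) :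
    LinearIndepOn K f (I ∪ B) ↔
      LinearIndepOn K f I ∧ Disjoint (span K (f '' I)) (span K (f '' X)) := by
  have hspan : span K (f '' B) = span K (f '' X) :=
    le_antisymm (span_mono (Set.image_mono hBX)) (span_le.2 hXB)
  rw [linearIndepOn_union_iff (hIX.mono_right hBX), hspan]
  simp only [hB, true_and]

theorem quotient_representation_eq_contraction_general
    {k S W : Type} [Field k] [DecidableEq S]
    [AddCommGroup W] [Module k W]
    (φ : (S → k) →ₗ[k] W) (X : Finset S) :
    letI V : Finset S → Submodule k W :=
      fun A => Submodule.span k ((fun a => φ (Pi.single a 1)) '' (↑A : Set S))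
    ∀ I : Finset S, Disjoint I X →
      (LinearIndependent k
          (fun a : ↥I => Submodule.Quotient.mk (p := V X) (φ (Pi.single a.1 1))) ↔
        ∃ B : Finset S, B ⊆ X ∧
          LinearIndependent k (fun a : ↥B => φ (Pi.single a.1 1)) ∧
          (∀ B' : Finset S, B ⊆ B' → B' ⊆ X →
            LinearIndependent k (fun a : ↥B' => φ (Pi.single a.1 1)) → B' = B) ∧
          LinearIndependent k (fun a : ↥(I ∪ B) => φ (Pi.single a.1 1))) := by
  intro I hIX
  set f : S → W := fun a => φ (Pi.single a 1)
  have hIX' : Disjoint (I : Set S) X := Finset.disjoint_coe.2 hIX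
  change LinearIndepOn k ((span k (f '' ↑X)).mkQ ∘ f) ↑I ↔
    ∃ B : Finset S, B ⊆ X ∧ LinearIndepOn k f ↑B ∧
      (∀ B' : Finset S, B ⊆ B' → B' ⊆ X → LinearIndepOn k f ↑B' → B' = B) ∧
      LinearIndepOn k f ↑(I ∪ B)
  rw [linearIndepOn_mkQ_comp_iff]
  constructor
  · intro hI
    obtain ⟨B, hBX, hB, hXB⟩ := X.exists_linearIndepOn_image_subset_span (K := k) f
    refine ⟨B, hBX, hB, (Finset.linearIndepOn_maximal_iff_image_subset_span f hBX hB).2 hXB, ?_⟩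
    rw [Finset.coe_union, linearIndepOn_union_iff_of_image_subset_span hIX'
      (Finset.coe_subset.2 hBX) hB hXB]
    exact hI
  · rintro ⟨B, hBX, hB, hmax, hIB⟩
    have hXB := (Finset.linearIndepOn_maximal_iff_image_subset_span f hBX hB).1 hmax
    rwa [Finset.coe_union, linearIndepOn_union_iff_of_image_subset_span hIX'
      (Finset.coe_subset.2 hBX) hB hXB] at hIB

theorem quotient_representation_eq_contraction
    {k S W : Type} [Field k] [Fintype S] [DecidableEq S]
    [AddCommGroup W] [Module k W]
    (φ : (S → k) →ₗ[k] W) (X : Finset S) :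
    letI V : Finset S → Submodule k W :=
      fun A => Submodule.span k ((fun a => φ (Pi.single a 1)) '' (↑A : Set S))
    ∀ I : Finset S, Disjoint I X →
      (LinearIndependent k
          (fun a : ↥I => Submodule.Quotient.mk (p := V X) (φ (Pi.single a.1 1))) ↔
        ∃ B : Finset S, B ⊆ X ∧
          LinearIndependent k (fun a : ↥B => φ (Pi.single a.1 1)) ∧
          (∀ B' : Finset S, B ⊆ B' → B' ⊆ X →
            LinearIndependent k (fun a : ↥B' => φ (Pi.single a.1 1)) → B' = B) ∧
          LinearIndependent k (fun a : ↥(I ∪ B) => φ (Pi.single a.1 1))) :=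
  quotient_representation_eq_contraction_general φ X
end

section
/- Let I be a monomial ideal in the polynomial ring R = k[x_1,...,x_m] and let J be the polarization of I, a squarefree monomial ideal in a larger polynomial ring R'. Then R/I is of generic type if and only if R'/J is of generic type. -/
section Aux

variable {m n : ℕ}

private lemma polz_inj (v w : Fin m → ℕ)
    (h : (fun p : Fin m × ℕ => if p.2 < v p.1 then (1:ℕ) else 0)
       = (fun p : Fin m × ℕ => if p.2 < w p.1 then (1:ℕ) else 0)) : v = w := by
  funext i
  by_contra hne
  rcases Nat.lt_or_ge (v i) (w i) with hlt | hge
  · have := congrFun h (i, v i)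
    simp [hlt] at this
  · have hlt : w i < v i := lt_of_le_of_ne hge (fun e => hne e.symm)
    have := congrFun h (i, w i)
    simp [hlt] at this

private lemma sup_ite (A : Finset (Fin n)) (h : Fin n → ℕ) (j : ℕ) :
    A.sup (fun s => if j < h s then 1 else 0) = if j < A.sup h then 1 else 0 := by
  by_cases hc : j < A.sup h
  · rw [Finset.lt_sup_iff] at hc
    obtain ⟨s, hs, hjs⟩ := hc
    simp only [Finset.lt_sup_iff.mpr ⟨s, hs, hjs⟩, if_true]
    apply le_antisymm
    · exact Finset.sup_le fun t _ => by split <;> simp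
    · calc (1 : ℕ) = if j < h s then 1 else 0 := by simp [hjs]
        _ ≤ _ := Finset.le_sup (f := fun s => if j < h s then 1 else 0) hs
  · simp only [hc, if_false]
    refine Nat.le_zero.mp (Finset.sup_le fun t ht => ?_)
    have : ¬ j < h t := fun hj => hc (lt_of_lt_of_le hj (Finset.le_sup ht))
    simp [this]

private lemma sup_polz (g : Fin n → (Fin m → ℕ)) (A : Finset (Fin n)) :
    (A.sup fun s => fun p : Fin m × ℕ => if p.2 < g s p.1 then (1:ℕ) else 0)
      = fun p : Fin m × ℕ => if p.2 < A.sup g p.1 then (1:ℕ) else 0 := by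
  funext p
  rw [Finset.sup_apply]
  rw [sup_ite]
  congr 1
  rw [Finset.sup_apply]

end Aux

/-!
STATEMENT 18: Let `I` be a monomial ideal with minimal monomial generators given by the
exponent vectors `g 0, ..., g (n-1)` in `ℕ^m` (minimality: no generator divides another),
and let `J` be its polarization: the squarefree monomial ideal in the variables `x_{i,j}`
(indexed by `Fin m × ℕ`) whose generators have exponent vectors
`pol (g s) = (i,j) ↦ if j < g s i then 1 else 0`.
Then `R/I` is of generic type if and only if `R'/J` is of generic type, where "of generic
type" means: every fiber of the lcm-degree map `A ↦ A.sup (generator degrees)` over its image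
is a closed interval in the boolean poset of subsets of the set of generators.
-/
theorem generic_type_iff_polarization_generic_type {m n : ℕ} (g : Fin n → (Fin m → ℕ))
    (hmin : ∀ s t : Fin n, s ≠ t → ¬ g s ≤ g t) :
    letI pol : (Fin m → ℕ) → (Fin m × ℕ → ℕ) := fun v p => if p.2 < v p.1 then 1 else 0
    ((∀ α ∈ Set.range (fun A : Finset (Fin n) => A.sup g),
        ∃ lo hi : Finset (Fin n), {A : Finset (Fin n) | A.sup g = α} = Set.Icc lo hi) ↔
      (∀ α ∈ Set.range (fun A : Finset (Fin n) => A.sup (fun s => pol (g s))),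
        ∃ lo hi : Finset (Fin n),
          {A : Finset (Fin n) | A.sup (fun s => pol (g s)) = α} = Set.Icc lo hi)) := by
  simp only [sup_polz g]
  constructor
  · rintro H β ⟨A, rfl⟩
    obtain ⟨lo, hi, hfib⟩ := H (A.sup g) ⟨A, rfl⟩
    refine ⟨lo, hi, ?_⟩
    rw [← hfib]
    ext B
    simp only [Set.mem_setOf_eq]
    exact ⟨fun h => polz_inj _ _ h, fun h => by rw [h]⟩
  · rintro H α ⟨A, rfl⟩
    obtain ⟨lo, hi, hfib⟩ :=
      H (fun p : Fin m × ℕ => if p.2 < A.sup g p.1 then (1:ℕ) else 0) ⟨A, rfl⟩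
    refine ⟨lo, hi, ?_⟩
    rw [← hfib]
    ext B
    simp only [Set.mem_setOf_eq]
    exact ⟨fun h => by rw [h], fun h => polz_inj _ _ h⟩
end
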